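/- If two simplicial maps g, g' : (I_{m,n}, ∂I_{m,n}) → (X, x₀) have homotopic realizations relative the boundary, |g| ≃ |g'| : (I², ∂I²) → (|X|, x₀), then for some k the compositions g∘ρ_k and g'∘ρ_k : (I_{km,kn}, ∂I_{km,kn}) → (X, x₀) are contiguity equivalent. -/

import Mathlib

structure ASC (V : Type) where
  faces : Set (Finset V)
  down_closed : ∀ ⦃s t : Finset V⦄, s ∈ faces → t ⊆ s → t ∈ faces

variable {U V W : Type}

/-- A vertex map is a simplicial map if it sends every simplex to a simplex. -/
def IsSimplicialMap [DecidableEq W] (K : ASC V) (L : ASC W) (f : V → W) : Prop :=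
  ∀ s ∈ K.faces, s.image f ∈ L.faces

/-- Two maps are contiguous if `f(σ) ∪ g(σ)` is a simplex for every simplex `σ`. -/
def Contiguous [DecidableEq W] (K : ASC V) (L : ASC W) (f g : V → W) : Prop :=
  ∀ s ∈ K.faces, s.image f ∪ s.image g ∈ L.faces

/-- Contiguity equivalence: a finite chain of contiguities through simplicial maps. -/
def ContigEquiv [DecidableEq W] (K : ASC V) (L : ASC W) : (V → W) → (V → W) → Prop :=
  Relation.ReflTransGen (fun a b =>
    IsSimplicialMap K L a ∧ IsSimplicialMap K L b ∧ Contiguous K L a b)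

/-- The categorical product of simplicial complexes. -/
def ASC.prod [DecidableEq V] [DecidableEq W] (K : ASC V) (L : ASC W) : ASC (V × W) where
  faces := {s | s.image Prod.fst ∈ K.faces ∧ s.image Prod.snd ∈ L.faces}
  down_closed := fun _s _t hs hts =>
    ⟨K.down_closed hs.1 (Finset.image_subset_image hts),
     L.down_closed hs.2 (Finset.image_subset_image hts)⟩

/-- The simplicial interval `I_m` on vertices `0, …, m`. -/
def interval (m : ℕ) : ASC ℕ where
  faces := {s | (∀ x ∈ s, x ≤ m) ∧ ∀ x ∈ s, ∀ y ∈ s, x ≤ y + 1}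
  down_closed := fun _s _t hs hts =>
    ⟨fun x hx => hs.1 x (hts hx), fun x hx y hy => hs.2 x (hts hx) y (hts hy)⟩

/-- The vertex map of `α_i : I_{m+1} → I_m`. -/
def alpha (i : ℕ) : ℕ → ℕ := fun s => if s ≤ i then s else s - 1

/-- The categorical product `I_m × I_n`. -/
def prodInterval (m n : ℕ) : ASC (ℕ × ℕ) := (interval m).prod (interval n)

/-- A face sphere: a simplicial map `(I_m × I_n, ∂(I_m × I_n)) → (X, x₀)`. -/
def IsFaceSphere [DecidableEq V] (X : ASC V) (x₀ : V) (m n : ℕ) (f : ℕ × ℕ → V) : Prop :=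
  IsSimplicialMap (prodInterval m n) X f ∧
  ∀ p : ℕ × ℕ, p.1 ≤ m → p.2 ≤ n →
    (p.1 = 0 ∨ p.1 = m ∨ p.2 = 0 ∨ p.2 = n) → f p = x₀

/-- Contiguity equivalence of face spheres, relative the boundary. -/
def FaceContigEquiv [DecidableEq V] (X : ASC V) (x₀ : V) (m n : ℕ) :
    (ℕ × ℕ → V) → (ℕ × ℕ → V) → Prop :=
  Relation.ReflTransGen (fun a b =>
    IsFaceSphere X x₀ m n a ∧ IsFaceSphere X x₀ m n b ∧
      Contiguous (prodInterval m n) X a b)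

/-- The trivial extension `f ∘ (α_m^r × α_n^s)`. -/
def trivExt (m n r s : ℕ) (f : ℕ × ℕ → V) : ℕ × ℕ → V :=
  f ∘ Prod.map ((alpha m)^[r]) ((alpha n)^[s])

/-- Extension-contiguity equivalence of face spheres of possibly different sizes. -/
def ExtContigEquiv [DecidableEq V] (X : ASC V) (x₀ : V) (m n : ℕ) (f : ℕ × ℕ → V)
    (m' n' : ℕ) (g : ℕ × ℕ → V) : Prop :=
  ∃ M N, m ≤ M ∧ m' ≤ M ∧ n ≤ N ∧ n' ≤ N ∧
    FaceContigEquiv X x₀ M N (trivExt m n (M - m) (N - n) f)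
      (trivExt m' n' (M - m') (N - n') g)

/-- The product `f · g` of face spheres: `f` in the lower-left block,
a translate of `g` in the upper-right block, basepoint elsewhere. -/
def fsMul (x₀ : V) (m n : ℕ) (f g : ℕ × ℕ → V) : ℕ × ℕ → V := fun p =>
  if p.1 ≤ m ∧ p.2 ≤ n then f p
  else if m + 1 ≤ p.1 ∧ n + 1 ≤ p.2 then g (p.1 - (m + 1), p.2 - (n + 1))
  else x₀
noncomputable section
open Set

/-- The triangulation `I_{m,n}` of the unit square: vertices `(i,j)` (standing for
`(i/m, j/n)`), each grid square cut by the lower-left-to-upper-right diagonal. -/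
def gridComplex (m n : ℕ) : ASC (ℕ × ℕ) where
  faces := {s | ∃ i j, i + 1 ≤ m ∧ j + 1 ≤ n ∧
    (s ⊆ {(i, j), (i + 1, j), (i + 1, j + 1)} ∨ s ⊆ {(i, j), (i, j + 1), (i + 1, j + 1)})}
  down_closed := by
    rintro s t ⟨i, j, hi, hj, h⟩ hts
    exact ⟨i, j, hi, hj, h.imp hts.trans hts.trans⟩

/-- Barycentric coordinates of a point of the unit square with respect to the
triangulation `I_{m,n}`. -/
noncomputable def bary (m n : ℕ) (y : ℝ × ℝ) : ℕ × ℕ → ℝ := fun p =>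
  let u : ℝ := m * y.1
  let v : ℝ := n * y.2
  let i : ℕ := ⌊u⌋₊
  let j : ℕ := ⌊v⌋₊
  let a : ℝ := u - (i : ℝ)
  let b : ℝ := v - (j : ℝ)
  if b ≤ a then
    (if p = (i, j) then 1 - a else 0) + (if p = (i + 1, j) then a - b else 0) +
      (if p = (i + 1, j + 1) then b else 0)
  else
    (if p = (i, j) then 1 - b else 0) + (if p = (i, j + 1) then b - a else 0) +
      (if p = (i + 1, j + 1) then a else 0)

/-- The geometric realization of a simplicial complex, as a subset of `V → ℝ`
(barycentric coordinates). -/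
def realization (K : ASC V) : Set (V → ℝ) :=
  {w | (∀ v, 0 ≤ w v) ∧ ∃ s ∈ K.faces, (∀ v, v ∉ s → w v = 0) ∧ ∑ v ∈ s, w v = 1}

/-- The realization `|g|` of a vertex map `g` on the triangulation `I_{m,n}`,
as a map from the unit square to barycentric coordinates on the target. -/
noncomputable def gridRealize (g : ℕ × ℕ → V) (m n : ℕ) (y : ℝ × ℝ) : V → ℝ :=
  fun u => ∑ᶠ p ∈ {p : ℕ × ℕ | g p = u}, bary m n y p

def unitSquare : Set (ℝ × ℝ) := Icc (0 : ℝ) 1 ×ˢ Icc (0 : ℝ) 1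

def squareBdry : Set (ℝ × ℝ) :=
  {y ∈ unitSquare | y.1 = 0 ∨ y.1 = 1 ∨ y.2 = 0 ∨ y.2 = 1}

/-- The point of `|X|` corresponding to the vertex `x₀`. -/
def vertexPoint [DecidableEq V] (x₀ : V) : V → ℝ := fun v => if v = x₀ then 1 else 0

/-- A continuous map of pairs `(I², ∂I²) → (|X|, x₀)`. -/
def IsSphereMap [DecidableEq V] (X : ASC V) (x₀ : V) (f : ℝ × ℝ → V → ℝ) : Prop :=
  ContinuousOn f unitSquare ∧ (∀ y ∈ unitSquare, f y ∈ realization X) ∧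
    ∀ y ∈ squareBdry, f y = vertexPoint x₀

/-- `g` is a simplicial approximation to `f`: for every `y` in the square,
`|g|(y)` lies in the carrier of `f(y)` (supports are nested). -/
def IsSimpApprox (X : ASC V) (m n : ℕ) (g : ℕ × ℕ → V) (f : ℝ × ℝ → V → ℝ) : Prop :=
  ∀ y ∈ unitSquare, ∀ u : V, gridRealize g m n y u ≠ 0 → f y u ≠ 0

/-- A simplicial map of pairs `(I_{m,n}, ∂I_{m,n}) → (X, x₀)`. -/
def IsGridSphere [DecidableEq V] (X : ASC V) (x₀ : V) (m n : ℕ) (g : ℕ × ℕ → V) : Prop :=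
  IsSimplicialMap (gridComplex m n) X g ∧
  ∀ p : ℕ × ℕ, p.1 ≤ m → p.2 ≤ n →
    (p.1 = 0 ∨ p.1 = m ∨ p.2 = 0 ∨ p.2 = n) → g p = x₀

/-- Homotopy relative the boundary between two maps `(I², ∂I²) → (|X|, x₀)`. -/
def HtpyRelBdry (X : ASC V) (F G : ℝ × ℝ → V → ℝ) : Prop :=
  ∃ H : (ℝ × ℝ) × ℝ → V → ℝ,
    ContinuousOn H (unitSquare ×ˢ Icc (0 : ℝ) 1) ∧
    (∀ p ∈ unitSquare ×ˢ Icc (0 : ℝ) 1, H p ∈ realization X) ∧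
    (∀ y ∈ unitSquare, H (y, 0) = F y) ∧
    (∀ y ∈ unitSquare, H (y, 1) = G y) ∧
    (∀ y ∈ squareBdry, ∀ t ∈ Icc (0 : ℝ) 1, H (y, t) = F y)

/-- The vertex map of the subdivision map `ρ_k : I_{km,kn} → I_{m,n}`. -/
def rho (k : ℕ) : ℕ × ℕ → ℕ × ℕ := fun p => (p.1 / k, p.2 / k)

/-- Horizontal concatenation of maps `(I², ∂I²) → (|X|, x₀)`: the product in `π₂`. -/
noncomputable def hcat (F G : ℝ × ℝ → V → ℝ) : ℝ × ℝ → V → ℝ := fun y =>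
  if y.1 ≤ 1 / 2 then F (2 * y.1, y.2) else G (2 * y.1 - 1, y.2)

end
/-- Contiguity equivalence of maps of pairs `(I_{m,n}, ∂I_{m,n}) → (X, x₀)`. -/
def GridContigEquiv {V : Type} [DecidableEq V] (X : ASC V) (x₀ : V) (m n : ℕ) :
    (ℕ × ℕ → V) → (ℕ × ℕ → V) → Prop :=
  Relation.ReflTransGen (fun a b =>
    IsGridSphere X x₀ m n a ∧ IsGridSphere X x₀ m n b ∧
      Contiguous (gridComplex m n) X a b)

/-!
Compactness of the prism `I² × I` gives `δ > 0` such that `H` maps each `δ`-ball into the open star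
of a single vertex, which can be taken to be `x₀` along `∂I² × I`. For `1 / k < δ`, choosing such a
vertex at `(w, l / k)` for every vertex `w` of `I_{km,kn}` defines maps `φ₀, …, φ_k` fixing the
boundary, and `φ_l`, `φ_{l+1}` are both simplicial approximations to `H(·, l / k)`. Two simplicial
approximations to the same map are contiguous, and since `ρ_k` maps open stars into open stars,
`g ∘ ρ_k` is a simplicial approximation to `|g| = H(·, 0)`. Hence
`g ∘ ρ_k ∼ φ₀ ∼ φ₁ ∼ ⋯ ∼ φ_k ∼ g' ∘ ρ_k`.
-/

open Set

lemma exists_eq_floor_add {u : ℝ} (hu : 0 ≤ u) : ∃ α : ℝ, 0 ≤ α ∧ α < 1 ∧ u = ⌊u⌋₊ + α :=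
  ⟨u - ⌊u⌋₊, sub_nonneg.2 (Nat.floor_le hu), by linarith [Nat.lt_floor_add_one u], by ring⟩

lemma one_le_abs_natCast_sub_or_eq_or_eq_succ {a i : ℕ} {α : ℝ} (h0 : 0 ≤ α) (h1 : α < 1) :
    (a ≠ i ∧ a ≠ i + 1 ∧ 1 ≤ |(a : ℝ) - (i + α)|) ∨ a = i ∨ a = i + 1 := by
  rcases (show a + 1 ≤ i ∨ a = i ∨ a = i + 1 ∨ i + 2 ≤ a by omega) with h | h | h | h
  · have : (a : ℝ) + 1 ≤ i := by exact_mod_cast h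
    exact Or.inl ⟨by omega, by omega, by rw [abs_sub_comm, le_abs]; left; linarith⟩
  · exact Or.inr (Or.inl h)
  · exact Or.inr (Or.inr h)
  · have : (i : ℝ) + 2 ≤ a := by exact_mod_cast h
    exact Or.inl ⟨by omega, by omega, by rw [le_abs]; left; linarith⟩

/-- The hat function of `q`: its positivity region, the open star of `q`, is the hexagon bounded by
horizontal, vertical and diagonal grid lines around `q`. -/
theorem bary_eq_hat (m n : ℕ) {y : ℝ × ℝ} (h1 : 0 ≤ y.1) (h2 : 0 ≤ y.2) (q : ℕ × ℕ) :
    bary m n y q = max 0 (1 - max (max |(q.1 : ℝ) - m * y.1| |(q.2 : ℝ) - n * y.2|)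
      |((q.1 : ℝ) - q.2) - (m * y.1 - n * y.2)|) := by
  obtain ⟨a, b⟩ := q
  obtain ⟨α, hα0, hα1, hu⟩ := exists_eq_floor_add (show 0 ≤ (m : ℝ) * y.1 by positivity)
  obtain ⟨β, hβ0, hβ1, hv⟩ := exists_eq_floor_add (show 0 ≤ (n : ℝ) * y.2 by positivity)
  simp only [bary, Prod.mk.injEq]
  generalize (m : ℝ) * y.1 = u at hu ⊢
  generalize (n : ℝ) * y.2 = v at hv ⊢
  generalize ⌊u⌋₊ = i at hu ⊢
  generalize ⌊v⌋₊ = j at hv ⊢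
  subst hu hv
  simp only [add_sub_cancel_left]
  rcases one_le_abs_natCast_sub_or_eq_or_eq_succ (a := a) (i := i) hα0 hα1 with
    ⟨ha, ha', hA⟩ | rfl | rfl
  · simp [ha, ha', hA]
  all_goals
    rcases one_le_abs_natCast_sub_or_eq_or_eq_succ (a := b) (i := j) hβ0 hβ1 with
      ⟨hb, hb', hB⟩ | rfl | rfl
    · simp [hb, hb', hB]
    all_goals grind

theorem bary_nonneg (m n : ℕ) {y : ℝ × ℝ} (h1 : 0 ≤ y.1) (h2 : 0 ≤ y.2) (q : ℕ × ℕ) :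
    0 ≤ bary m n y q := by
  rw [bary_eq_hat m n h1 h2]
  exact le_max_left _ _

theorem bary_pos_iff (m n : ℕ) {y : ℝ × ℝ} (h1 : 0 ≤ y.1) (h2 : 0 ≤ y.2) (q : ℕ × ℕ) :
    0 < bary m n y q ↔ |(q.1 : ℝ) - m * y.1| < 1 ∧ |(q.2 : ℝ) - n * y.2| < 1 ∧
      |((q.1 : ℝ) - q.2) - (m * y.1 - n * y.2)| < 1 := by
  rw [bary_eq_hat m n h1 h2, lt_max_iff, sub_pos, max_lt_iff, max_lt_iff]
  simp only [lt_irrefl, false_or, and_assoc]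

theorem support_bary_finite (m n : ℕ) {y : ℝ × ℝ} (h1 : 0 ≤ y.1) (h2 : 0 ≤ y.2) :
    (Function.support (bary m n y)).Finite := by
  refine (finite_Iic (⌈(m : ℝ) * y.1⌉₊, ⌈(n : ℝ) * y.2⌉₊)).subset fun q hq => ?_
  obtain ⟨ha, hb, -⟩ :=
    (bary_pos_iff m n h1 h2 q).1 ((bary_nonneg m n h1 h2 q).lt_of_ne' hq)
  have ha' : (q.1 : ℝ) < ⌈(m : ℝ) * y.1⌉₊ + 1 := by
    linarith [(abs_lt.1 ha).2, Nat.le_ceil ((m : ℝ) * y.1)]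
  have hb' : (q.2 : ℝ) < ⌈(n : ℝ) * y.2⌉₊ + 1 := by
    linarith [(abs_lt.1 hb).2, Nat.le_ceil ((n : ℝ) * y.2)]
  exact ⟨Nat.lt_succ_iff.1 (by exact_mod_cast ha'), Nat.lt_succ_iff.1 (by exact_mod_cast hb')⟩

theorem exists_bary_pos_of_gridRealize_ne_zero {a : ℕ × ℕ → V} {M N : ℕ} {y : ℝ × ℝ}
    (h1 : 0 ≤ y.1) (h2 : 0 ≤ y.2) {u : V} (h : gridRealize a M N y u ≠ 0) :
    ∃ w, a w = u ∧ 0 < bary M N y w := by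
  obtain ⟨w, hw, hne⟩ := exists_ne_zero_of_finsum_mem_ne_zero h
  exact ⟨w, hw, (bary_nonneg M N h1 h2 w).lt_of_ne' hne⟩

theorem gridRealize_ne_zero {a : ℕ × ℕ → V} {M N : ℕ} {y : ℝ × ℝ} (h1 : 0 ≤ y.1)
    (h2 : 0 ≤ y.2) {w : ℕ × ℕ} (hw : 0 < bary M N y w) : gridRealize a M N y (a w) ≠ 0 :=
  (finsum_cond_pos (p := fun q => a q = a w) (fun q _ => bary_nonneg M N h1 h2 q) ⟨w, rfl, hw⟩
    ((support_bary_finite M N h1 h2).subset inter_subset_left)).ne'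

theorem exists_bary_pos_of_mem_faces {M N : ℕ} {σ : Finset (ℕ × ℕ)}
    (hσ : σ ∈ (gridComplex M N).faces) : ∃ y ∈ unitSquare, ∀ w ∈ σ, 0 < bary M N y w := by
  obtain ⟨i, j, hi, hj, hσ⟩ := hσ
  have hM : (0 : ℝ) < M := by exact_mod_cast (show 0 < M by omega)
  have hN : (0 : ℝ) < N := by exact_mod_cast (show 0 < N by omega)
  have hi' : (i : ℝ) + 1 ≤ M := by exact_mod_cast hi
  have hj' : (j : ℝ) + 1 ≤ N := by exact_mod_cast hj
  -- `(i + s, j + t)` is the barycentre of the triangle containing `σ`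
  obtain ⟨s, t, hs0, hs1, ht0, ht1, hσ⟩ : ∃ s t : ℝ, 0 < s ∧ s < 1 ∧ 0 < t ∧ t < 1 ∧
      ∀ w ∈ σ, |(w.1 : ℝ) - (i + s)| < 1 ∧ |(w.2 : ℝ) - (j + t)| < 1 ∧
        |((w.1 : ℝ) - w.2) - ((i + s) - (j + t))| < 1 := by
    rcases hσ with hσ | hσ <;> [refine ⟨2 / 3, 1 / 3, ?_⟩; refine ⟨1 / 3, 2 / 3, ?_⟩] <;>
    · refine ⟨by norm_num, by norm_num, by norm_num, by norm_num, fun w hw => ?_⟩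
      have hw := hσ hw
      simp only [Finset.mem_insert, Finset.mem_singleton] at hw
      rcases hw with rfl | rfl | rfl <;> simp only [abs_lt] <;> push_cast <;>
        refine ⟨⟨?_, ?_⟩, ⟨?_, ?_⟩, ?_, ?_⟩ <;> linarith
  refine ⟨((i + s) / M, (j + t) / N), ⟨⟨by positivity, ?_⟩, by positivity, ?_⟩, fun w hw => ?_⟩
  · rw [div_le_one hM]; linarith
  · rw [div_le_one hN]; linarith
  · rw [bary_pos_iff M N (by positivity) (by positivity)]
    simpa only [mul_div_cancel₀ _ hM.ne', mul_div_cancel₀ _ hN.ne'] using hσ w hw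

/-- `ρ_k` is a simplicial approximation to the identity of the square. -/
theorem bary_pos_rho {k m n : ℕ} (hk : 0 < k) {y : ℝ × ℝ} (h1 : 0 ≤ y.1) (h2 : 0 ≤ y.2)
    {w : ℕ × ℕ} (h : 0 < bary (k * m) (k * n) y w) : 0 < bary m n y (rho k w) := by
  have hkR : (1 : ℝ) ≤ k := by exact_mod_cast hk
  have hdiv (a : ℕ) : (k : ℝ) * (a / k : ℕ) ≤ a ∧ (a : ℝ) + 1 ≤ k * (a / k : ℕ) + k := by
    constructor
    · exact_mod_cast Nat.mul_div_le a k
    · exact_mod_cast Nat.lt_mul_div_succ a hk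
  have hscale (x z : ℝ) (h : |k * x - k * z| < k) : |x - z| < 1 := by
    rwa [← mul_sub, abs_mul, abs_of_pos (by linarith), mul_lt_iff_lt_one_right (by linarith)] at h
  rw [bary_pos_iff _ _ h1 h2] at h ⊢
  obtain ⟨ha, hb, hab⟩ := h
  push_cast at ha hb hab
  rw [abs_lt] at ha hb hab
  obtain ⟨hw1, hw1'⟩ := hdiv w.1
  obtain ⟨hw2, hw2'⟩ := hdiv w.2
  refine ⟨hscale _ _ ?_, hscale _ _ ?_, hscale _ _ ?_⟩ <;> simp only [rho, mul_sub] <;>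
    rw [abs_lt] <;> constructor <;> linarith

noncomputable def gridPt (M N : ℕ) (w : ℕ × ℕ) : ℝ × ℝ := ((w.1 : ℝ) / M, (w.2 : ℝ) / N)

theorem gridPt_mem_unitSquare {M N : ℕ} {w : ℕ × ℕ} (h1 : w.1 ≤ M) (h2 : w.2 ≤ N) :
    gridPt M N w ∈ unitSquare := by
  simp only [gridPt, unitSquare, mem_prod, mem_Icc]
  exact ⟨⟨by positivity, div_le_one_of_le₀ (by exact_mod_cast h1) (by positivity)⟩,
    by positivity, div_le_one_of_le₀ (by exact_mod_cast h2) (by positivity)⟩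

theorem gridPt_mem_squareBdry {M N : ℕ} (hM : 0 < M) (hN : 0 < N) {w : ℕ × ℕ}
    (h1 : w.1 ≤ M) (h2 : w.2 ≤ N) (hw : w.1 = 0 ∨ w.1 = M ∨ w.2 = 0 ∨ w.2 = N) :
    gridPt M N w ∈ squareBdry := by
  refine ⟨gridPt_mem_unitSquare h1 h2, ?_⟩
  simp only [gridPt]
  rcases hw with h | h | h | h <;> simp [h, hM.ne', hN.ne']

theorem dist_gridPt_lt {M N : ℕ} (hM : 0 < M) (hN : 0 < N) {y : ℝ × ℝ} (h1 : 0 ≤ y.1)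
    (h2 : 0 ≤ y.2) {w : ℕ × ℕ} (h : 0 < bary M N y w) :
    dist y (gridPt M N w) < max (M : ℝ)⁻¹ (N : ℝ)⁻¹ := by
  obtain ⟨ha, hb, -⟩ := (bary_pos_iff M N h1 h2 w).1 h
  have hscale {K : ℕ} (hK : 0 < K) (a : ℕ) (x : ℝ) (h : |(a : ℝ) - K * x| < 1) :
      dist x (a / K) < (K : ℝ)⁻¹ := by
    have hK' : (0 : ℝ) < K := by exact_mod_cast hK
    rwa [Real.dist_eq, ← mul_lt_mul_iff_right₀ hK', ← abs_of_pos hK', ← abs_mul,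
      abs_of_pos hK', mul_inv_cancel₀ hK'.ne', mul_sub, mul_div_cancel₀ _ hK'.ne', abs_sub_comm]
  exact max_lt_max (hscale hM _ _ ha) (hscale hN _ _ hb)

theorem le_of_bary_pos {M N : ℕ} {y : ℝ × ℝ} (hy : y ∈ unitSquare) {w : ℕ × ℕ}
    (h : 0 < bary M N y w) : w.1 ≤ M ∧ w.2 ≤ N := by
  obtain ⟨⟨h1, h1'⟩, h2, h2'⟩ := hy
  obtain ⟨ha, hb, -⟩ := (bary_pos_iff M N h1 h2 w).1 h
  have ha' : (w.1 : ℝ) < M + 1 := by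
    nlinarith [(abs_lt.1 ha).2, (show (0 : ℝ) ≤ M by positivity)]
  have hb' : (w.2 : ℝ) < N + 1 := by
    nlinarith [(abs_lt.1 hb).2, (show (0 : ℝ) ≤ N by positivity)]
  exact ⟨Nat.lt_succ_iff.1 (by exact_mod_cast ha'), Nat.lt_succ_iff.1 (by exact_mod_cast hb')⟩

theorem exists_ne_zero_of_mem_realization {X : ASC V} {x : V → ℝ} (hx : x ∈ realization X) :
    ∃ v, x v ≠ 0 := by
  obtain ⟨-, s, -, -, hs⟩ := hx
  obtain ⟨v, -, hv⟩ := Finset.exists_ne_zero_of_sum_ne_zero (hs.symm ▸ one_ne_zero)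
  exact ⟨v, hv⟩

theorem mem_faces_of_forall_ne_zero {X : ASC V} {x : V → ℝ} (hx : x ∈ realization X)
    {s : Finset V} (hs : ∀ v ∈ s, x v ≠ 0) : s ∈ X.faces := by
  obtain ⟨-, t, ht, hzero, -⟩ := hx
  exact X.down_closed ht fun v hv => by_contra fun hvt => hs v hv (hzero v hvt)

theorem eq_one_of_mem_realization {X : ASC V} {x : V → ℝ} (hx : x ∈ realization X) {v₀ : V}
    (h : ∀ v, v ≠ v₀ → x v = 0) : x v₀ = 1 := by
  obtain ⟨-, s, -, -, hs⟩ := hx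
  rwa [Finset.sum_eq_single v₀ (fun v _ hv => h v hv) fun hv₀ => ?_] at hs
  rw [Finset.sum_eq_zero fun v hv => h v (ne_of_mem_of_not_mem hv hv₀)] at hs
  exact absurd hs zero_ne_one

def MapsGridBdryTo (x₀ : V) (m n : ℕ) (g : ℕ × ℕ → V) : Prop :=
  ∀ p : ℕ × ℕ, p.1 ≤ m → p.2 ≤ n → (p.1 = 0 ∨ p.1 = m ∨ p.2 = 0 ∨ p.2 = n) → g p = x₀

lemma natCast_eq_of_abs_sub_lt_one {a b : ℕ} (h : |(a : ℝ) - b| < 1) : a = b := by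
  obtain ⟨h1, h2⟩ := abs_lt.1 h
  have : a < b + 1 := by exact_mod_cast (by linarith : (a : ℝ) < b + 1)
  have : b < a + 1 := by exact_mod_cast (by linarith : (b : ℝ) < a + 1)
  omega

theorem gridRealize_eq_zero_of_mem_squareBdry {g : ℕ × ℕ → V} {x₀ : V} {m n : ℕ}
    (hg : MapsGridBdryTo x₀ m n g) {y : ℝ × ℝ} (hy : y ∈ squareBdry) {v : V} (hv : v ≠ x₀) :
    gridRealize g m n y v = 0 := by
  refine finsum_mem_of_eqOn_zero fun w (hw : g w = v) => by_contra fun hne => hv (hw ▸ ?_)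
  obtain ⟨hsq, hside⟩ := hy
  have hpos := (bary_nonneg m n hsq.1.1 hsq.2.1 w).lt_of_ne' hne
  obtain ⟨ha, hb, -⟩ := (bary_pos_iff m n hsq.1.1 hsq.2.1 w).1 hpos
  refine hg w (le_of_bary_pos hsq hpos).1 (le_of_bary_pos hsq hpos).2 ?_
  rcases hside with h | h | h | h
  · rw [h] at ha
    exact Or.inl (natCast_eq_of_abs_sub_lt_one (b := 0) (by simpa using ha))
  · rw [h] at ha
    exact Or.inr (Or.inl (natCast_eq_of_abs_sub_lt_one (by simpa using ha)))
  · rw [h] at hb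
    exact Or.inr (Or.inr (Or.inl (natCast_eq_of_abs_sub_lt_one (b := 0) (by simpa using hb))))
  · rw [h] at hb
    exact Or.inr (Or.inr (Or.inr (natCast_eq_of_abs_sub_lt_one (by simpa using hb))))

theorem MapsGridBdryTo.comp_rho {g : ℕ × ℕ → V} {x₀ : V} {m n k : ℕ} (hk : 0 < k)
    (hg : MapsGridBdryTo x₀ m n g) : MapsGridBdryTo x₀ (k * m) (k * n) (g ∘ rho k) := by
  intro p h1 h2 hp
  refine hg (rho k p) (Nat.div_le_of_le_mul h1) (Nat.div_le_of_le_mul h2) ?_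
  rcases hp with h | h | h | h <;> simp [rho, h, Nat.mul_div_cancel_left _ hk]

theorem IsSimpApprox.congr {X : ASC V} {M N : ℕ} {a : ℕ × ℕ → V} {f f' : ℝ × ℝ → V → ℝ}
    (h : IsSimpApprox X M N a f) (hff' : ∀ y ∈ unitSquare, f y = f' y) :
    IsSimpApprox X M N a f' :=
  fun y hy u hu => hff' y hy ▸ h y hy u hu

theorem isSimpApprox_comp_rho {X : ASC V} {g : ℕ × ℕ → V} {m n k : ℕ} (hk : 0 < k) :
    IsSimpApprox X (k * m) (k * n) (g ∘ rho k) (gridRealize g m n) := by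
  rintro y ⟨⟨h1, -⟩, h2, -⟩ u hu
  obtain ⟨w, rfl, hw⟩ := exists_bary_pos_of_gridRealize_ne_zero h1 h2 hu
  exact gridRealize_ne_zero h1 h2 (bary_pos_rho hk h1 h2 hw)

section Contiguity

variable [DecidableEq V] {X : ASC V}

theorem Contiguous.isSimplicialMap_left {K : ASC U} {a b : U → V} (h : Contiguous K X a b) :
    IsSimplicialMap K X a :=
  fun s hs => X.down_closed (h s hs) Finset.subset_union_left

theorem Contiguous.isSimplicialMap_right {K : ASC U} {a b : U → V} (h : Contiguous K X a b) :
    IsSimplicialMap K X b :=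
  fun s hs => X.down_closed (h s hs) Finset.subset_union_right

/-- Both maps send a simplex into the carrier of `f` at an interior point of that simplex. -/
theorem contiguous_of_isSimpApprox {M N : ℕ} {f : ℝ × ℝ → V → ℝ}
    (hf : ∀ y ∈ unitSquare, f y ∈ realization X) {a b : ℕ × ℕ → V}
    (ha : IsSimpApprox X M N a f) (hb : IsSimpApprox X M N b f) :
    Contiguous (gridComplex M N) X a b := by
  intro σ hσ
  obtain ⟨y, hy, hpos⟩ := exists_bary_pos_of_mem_faces hσ
  refine mem_faces_of_forall_ne_zero (hf y hy) fun v hv => ?_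
  simp only [Finset.mem_union, Finset.mem_image] at hv
  rcases hv with ⟨w, hw, rfl⟩ | ⟨w, hw, rfl⟩
  · exact ha y hy _ (gridRealize_ne_zero hy.1.1 hy.2.1 (hpos w hw))
  · exact hb y hy _ (gridRealize_ne_zero hy.1.1 hy.2.1 (hpos w hw))

theorem GridContigEquiv.single {x₀ : V} {M N : ℕ} {a b : ℕ × ℕ → V}
    (ha : MapsGridBdryTo x₀ M N a) (hb : MapsGridBdryTo x₀ M N b)
    (hab : Contiguous (gridComplex M N) X a b) : GridContigEquiv X x₀ M N a b :=
  Relation.ReflTransGen.single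
    ⟨⟨hab.isSimplicialMap_left, ha⟩, ⟨hab.isSimplicialMap_right, hb⟩, hab⟩

theorem gridContigEquiv_of_chain {x₀ : V} {M N : ℕ} (φ : ℕ → ℕ × ℕ → V) (L : ℕ)
    (hbd : ∀ l ≤ L, MapsGridBdryTo x₀ M N (φ l))
    (hc : ∀ l < L, Contiguous (gridComplex M N) X (φ l) (φ (l + 1))) :
    GridContigEquiv X x₀ M N (φ 0) (φ L) := by
  induction L with
  | zero => exact .refl
  | succ L ih =>
    exact (ih (fun l hl => hbd l (by omega)) fun l hl => hc l (by omega)).trans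
      (GridContigEquiv.single (hbd L (by omega)) (hbd (L + 1) le_rfl) (hc L (by omega)))

end Contiguity

/-- Lebesgue number lemma for the cover of `K` by the open stars `{p | H p i ≠ 0}`; uniform
continuity of `H · i₀` lets us choose `i₀` wherever `H` is the vertex `i₀`. -/
theorem exists_star_choice {α ι : Type*} [PseudoMetricSpace α] {K : Set α} (hK : IsCompact K)
    {H : α → ι → ℝ} (hH : ContinuousOn H K) (hne : ∀ p ∈ K, ∃ i, H p i ≠ 0) (i₀ : ι) :
    ∃ δ > 0, ∃ c : α → ι, (∀ p ∈ K, ∀ q ∈ K, dist q p < δ → H q (c p) ≠ 0) ∧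
      ∀ p ∈ K, H p i₀ = 1 → c p = i₀ := by
  have hcoord (i : ι) : ContinuousOn (fun p => H p i) K :=
    (continuous_apply i).comp_continuousOn hH
  choose O hO hOK using fun i => continuousOn_iff'.1 (hcoord i) {0}ᶜ isOpen_compl_singleton
  obtain ⟨δ₁, hδ₁, hleb⟩ := lebesgue_number_lemma_of_metric hK hO fun p hp => by
    obtain ⟨i, hi⟩ := hne p hp
    exact mem_iUnion.2 ⟨i, ((hOK i).subset ⟨hi, hp⟩).1⟩
  obtain ⟨δ₂, hδ₂, hunif⟩ := Metric.uniformContinuousOn_iff.1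
    (hK.uniformContinuousOn_of_continuous (hcoord i₀)) 1 one_pos
  have : Nonempty ι := ⟨i₀⟩
  choose! v hv using hleb
  classical
  refine ⟨min δ₁ δ₂, lt_min hδ₁ hδ₂, fun p => if H p i₀ = 1 then i₀ else v p,
    fun p hp q hq hpq => ?_, fun p _ hp => if_pos hp⟩
  dsimp only
  split_ifs with h
  · intro h0
    have := hunif q hq p hp (hpq.trans_le (min_le_right _ _))
    rw [Real.dist_eq, h0, h] at this
    norm_num at this
  · have : q ∈ O (v p) ∩ K := ⟨hv p hp (Metric.mem_ball.2 (hpq.trans_le (min_le_left _ _))), hq⟩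
    rw [← hOK] at this
    exact this.1

lemma natCast_div_mem_Icc {l k : ℕ} (h : l ≤ k) : (l : ℝ) / k ∈ Icc (0 : ℝ) 1 :=
  ⟨by positivity, div_le_one_of_le₀ (by exact_mod_cast h) (by positivity)⟩

/-- `φ l` sends a vertex `w` of `I_{M,N}` to a vertex whose open star contains the `H`-image of
the `δ`-ball around `(w, l / k)`, where `1 / k < δ`. -/
theorem exists_layer_approximations {X : ASC V} {x₀ : V} {H : (ℝ × ℝ) × ℝ → V → ℝ}
    (hHcont : ContinuousOn H (unitSquare ×ˢ Icc 0 1))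
    (hHreal : ∀ p ∈ unitSquare ×ˢ Icc (0 : ℝ) 1, H p ∈ realization X)
    (hHx₀ : ∀ y ∈ squareBdry, ∀ t ∈ Icc (0 : ℝ) 1, H (y, t) x₀ = 1) :
    ∃ k₀ : ℕ, ∀ k ≥ k₀, ∀ M N : ℕ, k ≤ M → k ≤ N → ∃ φ : ℕ → ℕ × ℕ → V,
      (∀ l ≤ k, MapsGridBdryTo x₀ M N (φ l)) ∧
      ∀ l ≤ k, ∀ t ∈ Icc (0 : ℝ) 1, |k * t - l| ≤ 1 →
        IsSimpApprox X M N (φ l) fun y => H (y, t) := by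
  obtain ⟨δ, hδ, c, hc, hcx₀⟩ :=
    exists_star_choice ((isCompact_Icc.prod isCompact_Icc).prod isCompact_Icc) hHcont
      (fun p hp => exists_ne_zero_of_mem_realization (hHreal p hp)) x₀
  obtain ⟨k₀, hk₀⟩ := exists_nat_one_div_lt hδ
  refine ⟨k₀ + 1, fun k hk M N hkM hkN => ⟨fun l w => c (gridPt M N w, l / k),
    fun l hl w h1 h2 hw => ?_, fun l hl t ht htl y hy u hu => ?_⟩⟩
  · have hw := gridPt_mem_squareBdry (by omega) (by omega) h1 h2 hw
    exact hcx₀ _ ⟨hw.1, natCast_div_mem_Icc hl⟩ (hHx₀ _ hw _ (natCast_div_mem_Icc hl))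
  obtain ⟨w, rfl, hw⟩ := exists_bary_pos_of_gridRealize_ne_zero hy.1.1 hy.2.1 hu
  obtain ⟨h1, h2⟩ := le_of_bary_pos hy hw
  refine hc _ ⟨gridPt_mem_unitSquare h1 h2, natCast_div_mem_Icc hl⟩ _ ⟨hy, ht⟩ ?_
  have hkR : (0 : ℝ) < k := by exact_mod_cast (show 0 < k by omega)
  have hkδ : (k : ℝ)⁻¹ < δ := by
    refine lt_of_le_of_lt ?_ hk₀
    rw [one_div]
    exact inv_anti₀ (by positivity) (by exact_mod_cast hk)
  have hMN : max (M : ℝ)⁻¹ (N : ℝ)⁻¹ ≤ (k : ℝ)⁻¹ :=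
    max_le (inv_anti₀ hkR (by exact_mod_cast hkM)) (inv_anti₀ hkR (by exact_mod_cast hkN))
  have ht' : dist t (l / k) ≤ (k : ℝ)⁻¹ := by
    rw [Real.dist_eq, show t - l / k = (k * t - l) / k by field_simp, abs_div,
      abs_of_pos hkR, inv_eq_one_div]
    exact div_le_div_of_nonneg_right htl hkR.le
  rw [Prod.dist_eq]
  exact max_lt ((dist_gridPt_lt (by omega) (by omega) hy.1.1 hy.2.1 hw).trans_le
    (hMN.trans hkδ.le)) (ht'.trans_lt hkδ)

/-- if `|g| ≃ |g'|` rel boundary, then for some `k` the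
compositions `g ∘ ρ_k` and `g' ∘ ρ_k` are contiguity equivalent. -/
theorem htpy_implies_contigEquiv {V : Type} [DecidableEq V] (X : ASC V) (x₀ : V)
    (m n : ℕ) (hm : 0 < m) (hn : 0 < n) (g g' : ℕ × ℕ → V)
    (hg : IsGridSphere X x₀ m n g) (hg' : IsGridSphere X x₀ m n g')
    (h : HtpyRelBdry X (gridRealize g m n) (gridRealize g' m n)) :
    ∃ k : ℕ, 2 ≤ k ∧
      GridContigEquiv X x₀ (k * m) (k * n) (g ∘ rho k) (g' ∘ rho k) := by
  obtain ⟨H, hHcont, hHreal, hH0, hH1, hHbd⟩ := h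
  have hreal (t : ℝ) (ht : t ∈ Icc (0 : ℝ) 1) : ∀ y ∈ unitSquare, H (y, t) ∈ realization X :=
    fun y hy => hHreal _ ⟨hy, ht⟩
  have hHx₀ (y : ℝ × ℝ) (hy : y ∈ squareBdry) (t : ℝ) (ht : t ∈ Icc (0 : ℝ) 1) :
      H (y, t) x₀ = 1 :=
    eq_one_of_mem_realization (hreal t ht y hy.1) fun v hv => by
      rw [hHbd y hy t ht]
      exact gridRealize_eq_zero_of_mem_squareBdry hg.2 hy hv
  obtain ⟨k₀, hk₀⟩ := exists_layer_approximations hHcont hHreal hHx₀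
  obtain ⟨k, hk₀k, hk2⟩ : ∃ k, k₀ ≤ k ∧ 2 ≤ k := ⟨max k₀ 2, le_max_left _ _, le_max_right _ _⟩
  have hk : 0 < k := by omega
  obtain ⟨φ, hφbd, hφ⟩ := hk₀ k hk₀k (k * m) (k * n)
    (Nat.le_mul_of_pos_right k hm) (Nat.le_mul_of_pos_right k hn)
  have hk' : (k : ℝ) ≠ 0 := by positivity
  refine ⟨k, hk2, ?_⟩
  have hstart : GridContigEquiv X x₀ (k * m) (k * n) (g ∘ rho k) (φ 0) :=
    .single (MapsGridBdryTo.comp_rho hk hg.2) (hφbd 0 (Nat.zero_le k)) <|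
      contiguous_of_isSimpApprox (hreal 0 ⟨le_rfl, zero_le_one⟩)
        ((isSimpApprox_comp_rho hk).congr fun y hy => (hH0 y hy).symm)
        (hφ 0 (Nat.zero_le k) 0 ⟨le_rfl, zero_le_one⟩ (by simp))
  have hend : GridContigEquiv X x₀ (k * m) (k * n) (φ k) (g' ∘ rho k) :=
    .single (hφbd k le_rfl) (MapsGridBdryTo.comp_rho hk hg'.2) <|
      contiguous_of_isSimpApprox (hreal 1 ⟨zero_le_one, le_rfl⟩)
        (hφ k le_rfl 1 ⟨zero_le_one, le_rfl⟩ (by simp))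
        ((isSimpApprox_comp_rho hk).congr fun y hy => (hH1 y hy).symm)
  have hmid := gridContigEquiv_of_chain φ k hφbd fun l hl =>
    contiguous_of_isSimpApprox (hreal _ (natCast_div_mem_Icc hl.le))
      (hφ l hl.le _ (natCast_div_mem_Icc hl.le) (by simp [mul_div_cancel₀ _ hk']))
      (hφ (l + 1) hl _ (natCast_div_mem_Icc hl.le) (by simp [mul_div_cancel₀ _ hk']))
  exact hstart.trans (hmid.trans hend)
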